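/- Fix an integer n ≥ 1 and constants M > 0 and C > 0. (i) If (z_l)_{l ≥ 1} are complex numbers with |Im z_l| ≤ M and |z_l − z̃¹_{n,l}| ≤ C/l for all l ≥ 1, then there exists C′ > 0 such that for every l ≥ 1 and every t ∈ [0,1], |j_n(z_l t) − j_n(z̃¹_{n,l} t)| ≤ C′/l. (ii) Let g_n(w) := 𝒥_n(w)/w, extended through its removable singularity at w = 0 to an entire function. If (z_l)_{l ≥ 1} are complex numbers with |Im z_l| ≤ M and |z_l − z̃²_{n,l}| ≤ C/l for all l ≥ 1, then there exists C′ > 0 such that for every l ≥ 1 and every t ∈ [0,1], |g_n(z_l t) − g_n(z̃²_{n,l} t)| ≤ C′/l. -/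

import Mathlib

open Complex Real Filter

/-- Spherical Bessel function of the first kind of order `n`, as an entire function. -/
noncomputable def sphJ (n : ℕ) (z : ℂ) : ℂ :=
  ∑' m : ℕ, ((-1 : ℂ) ^ m * z ^ (n + 2 * m)) /
    ((2 : ℂ) ^ m * (m.factorial : ℂ) * (Nat.doubleFactorial (2 * n + 2 * m + 1) : ℂ))

/-- Spherical Hankel function of the first kind of order `n` (for `z ≠ 0`). -/
noncomputable def sphH (n : ℕ) (z : ℂ) : ℂ :=
  (-Complex.I) ^ (n + 1) * Complex.exp (Complex.I * z) / z *
    ∑ m ∈ Finset.range (n + 1),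
      (Complex.I ^ m * ((n + m).factorial : ℂ)) /
        ((m.factorial : ℂ) * (2 * z) ^ m * ((n - m).factorial : ℂ))

/-- `𝒥_n(z) = j_n(z) + z j_n'(z)`. -/
noncomputable def calJ (n : ℕ) (z : ℂ) : ℂ := sphJ n z + z * deriv (sphJ n) z

/-- `ℋ_n(z) = h_n^{(1)}(z) + z (h_n^{(1)})'(z)`. -/
noncomputable def calH (n : ℕ) (z : ℂ) : ℂ := sphH n z + z * deriv (sphH n) z

/-- `f_n^1(z) = h_n^{(1)}(k) 𝒥_n(z) − j_n(z) ℋ_n(k)`. -/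
noncomputable def f1 (n : ℕ) (k : ℝ) (z : ℂ) : ℂ :=
  sphH n (k : ℂ) * calJ n z - sphJ n z * calH n (k : ℂ)

/-- `f_n^2(z) = (k²/z²) h_n^{(1)}(k) 𝒥_n(z) − j_n(z) ℋ_n(k)`. -/
noncomputable def f2 (n : ℕ) (k : ℝ) (z : ℂ) : ℂ :=
  ((k : ℂ) ^ 2 / z ^ 2) * sphH n (k : ℂ) * calJ n z - sphJ n z * calH n (k : ℂ)

/-- `z̃¹_{n,l} = (1 + 2l + n)π/2`. -/
noncomputable def zt1 (n l : ℕ) : ℂ := ((1 + 2 * l + n : ℕ) : ℂ) * (Real.pi : ℂ) / 2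

/-- `z̃²_{n,l} = (2l + n)π/2`. -/
noncomputable def zt2 (n l : ℕ) : ℂ := ((2 * l + n : ℕ) : ℂ) * (Real.pi : ℂ) / 2

/-- `g_n(w) = 𝒥_n(w)/w`, extended through the removable singularity at `w = 0`. -/
noncomputable def gfun (n : ℕ) (w : ℂ) : ℂ :=
  if w = 0 then deriv (calJ n) 0 else calJ n w / w

/-!
The series gives `j₀ z = sin z / z`, `j₁ z = sin z / z² - cos z / z` and the three-term
recurrence `j_{n+2} z = (2n+3)/z · j_{n+1} z - j_n z`, so by induction every `j_n` is bounded on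
each horizontal strip `|Im z| ≤ M` outside the unit disc, hence (being entire) on the whole strip.
For `n ≥ 1` we have `j_n 0 = 0`, so `g_n` is the entire function `dslope 𝒥_n 0`, equal to
`j_n w / w + j_n' w` away from `0`; it is therefore bounded on strips as well. Cauchy's estimate on
unit discs bounds the derivatives of both functions on strips, and the mean value inequality on the
convex strip `|Im z| ≤ M` (which contains `z_l t` and the real point `z̃_l t`) turns
`‖z_l - z̃_l‖ ≤ C / l` into the `O(1 / l)` bound.
-/

open scoped Nat

noncomputable def sphJDenom (n m : ℕ) : ℕ := 2 ^ m * m ! * (2 * n + 2 * m + 1)‼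

lemma sphJDenom_pos (n m : ℕ) : 0 < sphJDenom n m := by
  unfold sphJDenom; have := Nat.doubleFactorial_pos (2 * n + 2 * m + 1); positivity

lemma factorial_le_sphJDenom (n m : ℕ) : m ! ≤ sphJDenom n m := by
  unfold sphJDenom
  calc m ! ≤ 2 ^ m * m ! := Nat.le_mul_of_pos_left _ (by positivity)
    _ ≤ _ := Nat.le_mul_of_pos_right _ (Nat.doubleFactorial_pos _)

lemma sphJDenom_zero_left (m : ℕ) : sphJDenom 0 m = (2 * m + 1)! := by
  rw [sphJDenom, Nat.factorial_eq_mul_doubleFactorial, Nat.doubleFactorial_two_mul]; ring_nf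

lemma sphJDenom_succ_left (n m : ℕ) :
    sphJDenom (n + 1) m = (2 * n + 2 * m + 3) * sphJDenom n m := by
  rw [sphJDenom, sphJDenom, show 2 * (n + 1) + 2 * m + 1 = 2 * n + 2 * m + 1 + 2 by ring,
    Nat.doubleFactorial_add_two]; ring

lemma sphJDenom_succ_right (n m : ℕ) :
    sphJDenom n (m + 1) = 2 * (m + 1) * sphJDenom (n + 1) m := by
  rw [sphJDenom, sphJDenom, Nat.factorial_succ,
    show 2 * n + 2 * (m + 1) + 1 = 2 * (n + 1) + 2 * m + 1 by ring]; ring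

noncomputable def sphJTerm (n m : ℕ) (z : ℂ) : ℂ := (-1) ^ m * z ^ (n + 2 * m) / sphJDenom n m

lemma norm_sphJTerm_le (n m : ℕ) (z : ℂ) :
    ‖sphJTerm n m z‖ ≤ ‖z‖ ^ n * (‖z‖ ^ 2) ^ m / m ! := by
  simp only [sphJTerm, norm_div, norm_mul, norm_pow, norm_neg, norm_one, one_pow, one_mul,
    Complex.norm_natCast, pow_add, pow_mul]
  gcongr
  exact_mod_cast factorial_le_sphJDenom n m

lemma summable_pow_mul_pow_div_factorial (n : ℕ) (r : ℝ) :
    Summable fun m ↦ r ^ n * (r ^ 2) ^ m / m ! := by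
  simpa only [mul_div_assoc] using (Real.summable_pow_div_factorial (r ^ 2)).mul_left (r ^ n)

lemma summable_norm_sphJTerm (n : ℕ) (z : ℂ) : Summable fun m ↦ ‖sphJTerm n m z‖ :=
  .of_nonneg_of_le (fun _ ↦ norm_nonneg _) (norm_sphJTerm_le n · z)
    (summable_pow_mul_pow_div_factorial n ‖z‖)

lemma hasSum_sphJTerm (n : ℕ) (z : ℂ) : HasSum (fun m ↦ sphJTerm n m z) (sphJ n z) := by
  have hsphJ : sphJ n z = ∑' m, sphJTerm n m z := by
    simp only [sphJ, sphJTerm, sphJDenom, Nat.cast_mul, Nat.cast_pow, Nat.cast_ofNat]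
  exact hsphJ ▸ (summable_norm_sphJTerm n z).of_norm.hasSum

lemma differentiable_sphJ (n : ℕ) : Differentiable ℂ (sphJ n) := by
  intro z
  set R := ‖z‖ + 1
  have hdiff : DifferentiableOn ℂ (fun w ↦ ∑' m, sphJTerm n m w) (Metric.ball 0 R) := by
    refine differentiableOn_tsum_of_summable_norm (summable_pow_mul_pow_div_factorial n R)
      (fun m ↦ (((differentiable_pow _).const_mul _).div_const _).differentiableOn)
      Metric.isOpen_ball fun m w hw ↦ (norm_sphJTerm_le n m w).trans ?_
    have hwR : ‖w‖ ≤ R := by simpa using (Metric.mem_ball.mp hw).le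
    gcongr
  have hz : Metric.ball (0 : ℂ) R ∈ nhds z := Metric.isOpen_ball.mem_nhds (by simp [R])
  exact (hdiff.differentiableAt hz).congr_of_eventuallyEq
    (.of_forall fun w ↦ (hasSum_sphJTerm n w).tsum_eq.symm)

lemma HasSum.nat_succ_of_zero {G : Type*} [AddCommGroup G] [TopologicalSpace G]
    [IsTopologicalAddGroup G] {f : ℕ → G} {a : G} (hf : HasSum f a) (h0 : f 0 = 0) :
    HasSum (fun m ↦ f (m + 1)) a := by
  simpa [h0] using (hasSum_nat_add_iff' 1).mpr hf

lemma sphJ_zero_eq {z : ℂ} (hz : z ≠ 0) : sphJ 0 z = Complex.sin z / z := by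
  refine (hasSum_sphJTerm 0 z).unique
    (((Complex.hasSum_sin z).div_const z).congr_fun fun m ↦ ?_)
  rw [sphJTerm, sphJDenom_zero_left, zero_add, pow_succ]
  field_simp

lemma sphJ_one_eq {z : ℂ} (hz : z ≠ 0) :
    sphJ 1 z = Complex.sin z / z ^ 2 - Complex.cos z / z := by
  refine (hasSum_sphJTerm 1 z).unique ((((Complex.hasSum_sin z).div_const (z ^ 2)).sub
    ((Complex.hasSum_cos z).div_const z)).nat_succ_of_zero (by field_simp; ring) |>.congr_fun
      fun m ↦ ?_)
  have hsin : (((2 * (m + 1) + 1)! : ℕ) : ℂ) = 2 * (m + 1) * sphJDenom 1 m := by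
    rw [← sphJDenom_zero_left, sphJDenom_succ_right]; push_cast; ring
  have hcos : (((2 * (m + 1))! : ℕ) : ℂ) * (2 * m + 3) = 2 * (m + 1) * sphJDenom 1 m := by
    rw [← hsin, Nat.factorial_succ]; push_cast; ring
  have hD : (sphJDenom 1 m : ℂ) ≠ 0 := by exact_mod_cast (sphJDenom_pos 1 m).ne'
  have hc : (((2 * (m + 1))! : ℕ) : ℂ) ≠ 0 := by exact_mod_cast (Nat.factorial_pos _).ne'
  rw [sphJTerm, hsin]
  field_simp
  linear_combination (-1) ^ m * z ^ (2 * m + 3) * hcos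

lemma sphJ_add_two (n : ℕ) {z : ℂ} (hz : z ≠ 0) :
    sphJ (n + 2) z = (2 * n + 3) / z * sphJ (n + 1) z - sphJ n z := by
  have hD (k m : ℕ) : (sphJDenom k m : ℂ) ≠ 0 := by exact_mod_cast (sphJDenom_pos k m).ne'
  refine (hasSum_sphJTerm (n + 2) z).unique ((((hasSum_sphJTerm (n + 1) z).mul_left
    ((2 * n + 3) / z)).sub (hasSum_sphJTerm n z)).nat_succ_of_zero ?_ |>.congr_fun fun m ↦ ?_)
  · have h0 : (sphJDenom (n + 1) 0 : ℂ) = (2 * n + 3) * sphJDenom n 0 := by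
      rw [sphJDenom_succ_left]; push_cast; ring
    have hn : (2 * n + 3 : ℂ) ≠ 0 := by norm_cast
    simp only [sphJTerm, h0]
    field_simp
    ring
  -- `q` is kept atomic: once expanded, `field_simp` no longer sees that it is nonzero.
  · obtain ⟨q, hq, hq0⟩ : ∃ q : ℂ, q = 2 * n + 2 * m + 5 ∧ q ≠ 0 :=
      ⟨_, rfl, by norm_cast⟩
    have h1 :
        (sphJDenom (n + 1) (m + 1) : ℂ) = 2 * (m + 1) * q * sphJDenom (n + 1) m := by
      rw [sphJDenom_succ_right, sphJDenom_succ_left, hq]; push_cast; ring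
    have h2 : (sphJDenom n (m + 1) : ℂ) = 2 * (m + 1) * sphJDenom (n + 1) m := by
      rw [sphJDenom_succ_right]; push_cast; ring
    have h3 : (sphJDenom (n + 2) m : ℂ) = q * sphJDenom (n + 1) m := by
      rw [sphJDenom_succ_left, hq]; push_cast; ring
    have hm : (m + 1 : ℂ) ≠ 0 := by exact_mod_cast m.succ_ne_zero
    simp only [sphJTerm, h1, h2, h3]
    field_simp
    rw [hq]
    ring

lemma norm_exp_le_exp_abs_re (w : ℂ) : ‖Complex.exp w‖ ≤ Real.exp |w.re| := by
  rw [Complex.norm_exp]; exact Real.exp_le_exp.2 (le_abs_self _)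

lemma norm_sin_le_exp_abs_im (z : ℂ) : ‖Complex.sin z‖ ≤ Real.exp |z.im| := by
  have h (w : ℂ) (hw : |w.re| = |z.im|) : ‖Complex.exp w‖ ≤ Real.exp |z.im| :=
    hw ▸ norm_exp_le_exp_abs_re w
  calc ‖Complex.sin z‖
      = ‖Complex.exp (-z * Complex.I) - Complex.exp (z * Complex.I)‖ / 2 := by
        rw [Complex.sin, norm_div, norm_mul, Complex.norm_I, mul_one, Complex.norm_two]
    _ ≤ (Real.exp |z.im| + Real.exp |z.im|) / 2 := by
        gcongr
        exact (norm_sub_le _ _).trans (add_le_add (h _ (by simp)) (h _ (by simp)))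
    _ = Real.exp |z.im| := by ring

lemma norm_cos_le_exp_abs_im (z : ℂ) : ‖Complex.cos z‖ ≤ Real.exp |z.im| := by
  have h (w : ℂ) (hw : |w.re| = |z.im|) : ‖Complex.exp w‖ ≤ Real.exp |z.im| :=
    hw ▸ norm_exp_le_exp_abs_re w
  calc ‖Complex.cos z‖
      = ‖Complex.exp (z * Complex.I) + Complex.exp (-z * Complex.I)‖ / 2 := by
        rw [Complex.cos, norm_div, Complex.norm_two]
    _ ≤ (Real.exp |z.im| + Real.exp |z.im|) / 2 := by
        gcongr
        exact (norm_add_le _ _).trans (add_le_add (h _ (by simp)) (h _ (by simp)))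
    _ = Real.exp |z.im| := by ring

def BoundedOnStrips (f : ℂ → ℂ) : Prop :=
  ∀ M : ℝ, ∃ B : ℝ, ∀ z : ℂ, |z.im| ≤ M → ‖f z‖ ≤ B

def BoundedOnStripsOutside (r : ℝ) (f : ℂ → ℂ) : Prop :=
  ∀ M : ℝ, ∃ B : ℝ, ∀ z : ℂ, r ≤ ‖z‖ → |z.im| ≤ M → ‖f z‖ ≤ B

namespace BoundedOnStripsOutside

variable {r : ℝ} {f g : ℂ → ℂ}

lemma congr (hf : BoundedOnStripsOutside r f) (hfg : ∀ z, r ≤ ‖z‖ → f z = g z) :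
    BoundedOnStripsOutside r g := fun M ↦
  (hf M).imp fun _ hB z hz him ↦ hfg z hz ▸ hB z hz him

lemma add (hf : BoundedOnStripsOutside r f) (hg : BoundedOnStripsOutside r g) :
    BoundedOnStripsOutside r (f + g) := fun M ↦ by
  obtain ⟨B, hB⟩ := hf M
  obtain ⟨B', hB'⟩ := hg M
  exact ⟨B + B', fun z hz him ↦
    (norm_add_le _ _).trans (add_le_add (hB z hz him) (hB' z hz him))⟩

lemma sub (hf : BoundedOnStripsOutside r f) (hg : BoundedOnStripsOutside r g) :
    BoundedOnStripsOutside r (f - g) := fun M ↦ by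
  obtain ⟨B, hB⟩ := hf M
  obtain ⟨B', hB'⟩ := hg M
  exact ⟨B + B', fun z hz him ↦
    (norm_sub_le _ _).trans (add_le_add (hB z hz him) (hB' z hz him))⟩

lemma mul (hf : BoundedOnStripsOutside r f) (hg : BoundedOnStripsOutside r g) :
    BoundedOnStripsOutside r (f * g) := fun M ↦ by
  obtain ⟨B, hB⟩ := hf M
  obtain ⟨B', hB'⟩ := hg M
  refine ⟨B * B', fun z hz him ↦ (norm_mul_le _ _).trans ?_⟩
  exact mul_le_mul (hB z hz him) (hB' z hz him) (norm_nonneg _)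
    ((norm_nonneg _).trans (hB z hz him))

lemma const (c : ℂ) : BoundedOnStripsOutside r fun _ ↦ c := fun _ ↦
  ⟨‖c‖, fun _ _ _ ↦ le_rfl⟩

lemma boundedOnStrips (hf : BoundedOnStripsOutside r f) (hcont : Continuous f) :
    BoundedOnStrips f := fun M ↦ by
  obtain ⟨B, hB⟩ := hf M
  obtain ⟨B₀, hB₀⟩ := (isCompact_closedBall (0 : ℂ) r).exists_bound_of_continuousOn
    hcont.continuousOn
  refine ⟨max B B₀, fun z him ↦ ?_⟩
  rcases le_or_gt r ‖z‖ with hz | hz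
  · exact (hB z hz him).trans (le_max_left _ _)
  · exact (hB₀ z (by simpa using hz.le)).trans (le_max_right _ _)

end BoundedOnStripsOutside

lemma BoundedOnStrips.outside {f : ℂ → ℂ} (hf : BoundedOnStrips f) (r : ℝ) :
    BoundedOnStripsOutside r f := fun M ↦
  (hf M).imp fun _ hB z _ ↦ hB z

lemma boundedOnStripsOutside_inv : BoundedOnStripsOutside 1 (·⁻¹) := fun _ ↦
  ⟨1, fun z hz _ ↦ by simpa using inv_le_one_of_one_le₀ hz⟩

lemma boundedOnStrips_sin : BoundedOnStrips Complex.sin := fun M ↦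
  ⟨Real.exp M, fun z him ↦ (norm_sin_le_exp_abs_im z).trans (Real.exp_le_exp.2 him)⟩

lemma boundedOnStrips_cos : BoundedOnStrips Complex.cos := fun M ↦
  ⟨Real.exp M, fun z him ↦ (norm_cos_le_exp_abs_im z).trans (Real.exp_le_exp.2 him)⟩

/-- Cauchy's estimate on discs of radius `1` centred in the strip `|Im z| ≤ M`. -/
lemma BoundedOnStrips.deriv {f : ℂ → ℂ} (hf : BoundedOnStrips f) (hd : Differentiable ℂ f) :
    BoundedOnStrips (deriv f) := fun M ↦ by
  obtain ⟨B, hB⟩ := hf (M + 1)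
  refine ⟨B, fun z him ↦ ?_⟩
  have hsphere (w : ℂ) (hw : w ∈ Metric.sphere z 1) : |w.im| ≤ M + 1 := by
    have hwz : ‖w - z‖ = 1 := by rw [← Complex.dist_eq]; exact Metric.mem_sphere.1 hw
    calc |w.im| ≤ |z.im| + |(w - z).im| := by simpa using abs_add_le z.im (w - z).im
      _ ≤ M + 1 := add_le_add him (hwz ▸ Complex.abs_im_le_norm _)
  simpa using Complex.norm_deriv_le_of_forall_mem_sphere_norm_le one_pos hd.diffContOnCl
    fun w hw ↦ hB w (hsphere w hw)

lemma boundedOnStripsOutside_sphJ : ∀ n, BoundedOnStripsOutside 1 (sphJ n) := by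
  have hz {z : ℂ} (hz : 1 ≤ ‖z‖) : z ≠ 0 := norm_pos_iff.1 (one_pos.trans_le hz)
  have hsin := boundedOnStrips_sin.outside 1
  refine Nat.twoStepInduction ?_ ?_ fun n h₀ h₁ ↦ ?_
  · refine (hsin.mul boundedOnStripsOutside_inv).congr fun z h ↦ ?_
    simp [sphJ_zero_eq (hz h), div_eq_mul_inv]
  · refine ((hsin.mul boundedOnStripsOutside_inv).sub (boundedOnStrips_cos.outside 1)
      |>.mul boundedOnStripsOutside_inv).congr fun z h ↦ ?_
    rw [sphJ_one_eq (hz h), Pi.mul_apply, Pi.sub_apply, Pi.mul_apply]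
    ring
  · refine ((BoundedOnStripsOutside.const (2 * n + 3)).mul boundedOnStripsOutside_inv |>.mul h₁
      |>.sub h₀).congr fun z h ↦ ?_
    rw [sphJ_add_two n (hz h), Pi.sub_apply, Pi.mul_apply, Pi.mul_apply]
    ring

lemma boundedOnStrips_sphJ (n : ℕ) : BoundedOnStrips (sphJ n) :=
  (boundedOnStripsOutside_sphJ n).boundedOnStrips (differentiable_sphJ n).continuous

lemma sphJ_apply_zero {n : ℕ} (hn : n ≠ 0) : sphJ n 0 = 0 := by
  simp [sphJ, hn]

lemma differentiable_calJ (n : ℕ) : Differentiable ℂ (calJ n) :=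
  (differentiable_sphJ n).add (differentiable_id.mul (differentiable_sphJ n).deriv)

lemma gfun_eq_dslope {n : ℕ} (hn : n ≠ 0) : gfun n = dslope (calJ n) 0 := by
  ext w
  rcases eq_or_ne w 0 with rfl | hw
  · rw [gfun, if_pos rfl, dslope_same]
  · rw [gfun, if_neg hw, dslope_of_ne _ hw, slope_def_field, calJ, calJ, sphJ_apply_zero hn]
    simp

lemma differentiable_gfun {n : ℕ} (hn : n ≠ 0) : Differentiable ℂ (gfun n) := by
  rw [gfun_eq_dslope hn, ← differentiableOn_univ,
    Complex.differentiableOn_dslope Filter.univ_mem, differentiableOn_univ]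
  exact differentiable_calJ n

lemma boundedOnStrips_gfun {n : ℕ} (hn : n ≠ 0) : BoundedOnStrips (gfun n) := by
  refine BoundedOnStripsOutside.boundedOnStrips (r := 1) ?_ (differentiable_gfun hn).continuous
  refine ((boundedOnStrips_sphJ n).outside 1 |>.mul boundedOnStripsOutside_inv |>.add
    (((boundedOnStrips_sphJ n).deriv (differentiable_sphJ n)).outside 1)).congr fun z h ↦ ?_
  have hz : z ≠ 0 := norm_pos_iff.1 (one_pos.trans_le h)
  rw [gfun, if_neg hz, calJ, Pi.add_apply, Pi.mul_apply]
  field_simp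

lemma convex_abs_im_le (M : ℝ) : Convex ℝ {z : ℂ | |z.im| ≤ M} := by
  simpa only [abs_le, Set.ofPred_and] using
    (convex_halfSpace_im_ge (-M)).inter (convex_halfSpace_im_le M)

lemma exists_bound_norm_sub_comp_mul_ofReal {f : ℂ → ℂ} (hf : Differentiable ℂ f)
    (hf' : BoundedOnStrips (deriv f)) {M C : ℝ} {z w : ℕ → ℂ}
    (hz : ∀ l : ℕ, 1 ≤ l → |(z l).im| ≤ M ∧ ‖z l - w l‖ ≤ C / l)
    (hw : ∀ l : ℕ, |(w l).im| ≤ M) :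
    ∃ C' > (0 : ℝ), ∀ l : ℕ, 1 ≤ l → ∀ t ∈ Set.Icc (0 : ℝ) 1,
      ‖f (z l * t) - f (w l * t)‖ ≤ C' / l := by
  obtain ⟨K, hK⟩ := hf' M
  refine ⟨max (K * C) 1, by positivity, fun l hl t ⟨ht₀, ht₁⟩ ↦ ?_⟩
  have hstrip (u : ℂ) (hu : |u.im| ≤ M) : |(u * t).im| ≤ M := by
    rw [Complex.im_mul_ofReal, abs_mul, abs_of_nonneg ht₀]
    exact (mul_le_of_le_one_right (abs_nonneg _) ht₁).trans hu
  have hzt := hstrip _ (hz l hl).1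
  have hK₀ : 0 ≤ K := (norm_nonneg _).trans (hK _ hzt)
  have hdist : ‖z l * t - w l * t‖ ≤ C / l := by
    rw [← sub_mul, norm_mul, Complex.norm_of_nonneg ht₀]
    exact (mul_le_of_le_one_right (norm_nonneg _) ht₁).trans (hz l hl).2
  calc ‖f (z l * t) - f (w l * t)‖ ≤ K * ‖z l * t - w l * t‖ :=
        (convex_abs_im_le M).norm_image_sub_le_of_norm_deriv_le (fun u _ ↦ hf u)
          (fun u hu ↦ hK u hu) (hstrip _ (hw l)) hzt
    _ ≤ K * (C / l) := by gcongr
    _ ≤ max (K * C) 1 / l := by rw [← mul_div_assoc]; gcongr; exact le_max_left _ _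

theorem stmt12_general (n : ℕ) (hn : 1 ≤ n) (M C : ℝ) (hM : 0 < M) (z1 z2 : ℕ → ℂ) :
    ((∀ l : ℕ, 1 ≤ l → |(z1 l).im| ≤ M ∧ ‖z1 l - zt1 n l‖ ≤ C / l) →
      ∃ C' > (0 : ℝ), ∀ l : ℕ, 1 ≤ l → ∀ t ∈ Set.Icc (0 : ℝ) 1,
        ‖sphJ n (z1 l * (t : ℂ)) - sphJ n (zt1 n l * (t : ℂ))‖ ≤ C' / l) ∧
    ((∀ l : ℕ, 1 ≤ l → |(z2 l).im| ≤ M ∧ ‖z2 l - zt2 n l‖ ≤ C / l) →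
      ∃ C' > (0 : ℝ), ∀ l : ℕ, 1 ≤ l → ∀ t ∈ Set.Icc (0 : ℝ) 1,
        ‖gfun n (z2 l * (t : ℂ)) - gfun n (zt2 n l * (t : ℂ))‖ ≤ C' / l) := by
  have hn₀ : n ≠ 0 := Nat.one_le_iff_ne_zero.1 hn
  have hreal {w : ℕ → ℂ} (hw : ∀ l, (w l).im = 0) (l : ℕ) : |(w l).im| ≤ M := by
    simpa [hw l] using hM.le
  constructor
  · intro h
    exact exists_bound_norm_sub_comp_mul_ofReal (differentiable_sphJ n)
      ((boundedOnStrips_sphJ n).deriv (differentiable_sphJ n)) h (hreal fun l ↦ by simp [zt1])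
  · intro h
    exact exists_bound_norm_sub_comp_mul_ofReal (differentiable_gfun hn₀)
      ((boundedOnStrips_gfun hn₀).deriv (differentiable_gfun hn₀)) h
      (hreal fun l ↦ by simp [zt2])

/-- uniform `O(1/l)` comparison of `j_n(z_l t)` with `j_n(z̃_l t)` on `[0,1]`. -/
theorem stmt12 (n : ℕ) (hn : 1 ≤ n) (M C : ℝ) (hM : 0 < M) (hC : 0 < C) (z1 z2 : ℕ → ℂ) :
    ((∀ l : ℕ, 1 ≤ l → |(z1 l).im| ≤ M ∧ ‖z1 l - zt1 n l‖ ≤ C / l) →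
      ∃ C' > (0 : ℝ), ∀ l : ℕ, 1 ≤ l → ∀ t ∈ Set.Icc (0 : ℝ) 1,
        ‖sphJ n (z1 l * (t : ℂ)) - sphJ n (zt1 n l * (t : ℂ))‖ ≤ C' / l) ∧
    ((∀ l : ℕ, 1 ≤ l → |(z2 l).im| ≤ M ∧ ‖z2 l - zt2 n l‖ ≤ C / l) →
      ∃ C' > (0 : ℝ), ∀ l : ℕ, 1 ≤ l → ∀ t ∈ Set.Icc (0 : ℝ) 1,
        ‖gfun n (z2 l * (t : ℂ)) - gfun n (zt2 n l * (t : ℂ))‖ ≤ C' / l) :=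
  stmt12_general n hn M C hM z1 z2
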